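/- arXiv:1804.06127 — 2 statements merged into one kernel-verified Lean document; each statement's English description precedes it below -/
import Mathlib

section
/- With the token diffusion iteration q(t+1) = P̲ q(t) + D^{-1} b̲, q(0) = 0, and limit q(∞) = (I−P̲)^{-1} D^{-1} b̲, the error satisfies ‖q(t) − q(∞)‖ ≤ (vol_max/vol_min)^{1/2} · ρ̲^t / ((1 − ρ̲) · vol(source)), where ρ̲ < 1 is the spectral radius of P̲. -/
open Matrix

/-- The spectral radius of a real square matrix. -/
noncomputable def specRad {n : ℕ} (M : Matrix (Fin n) (Fin n) ℝ) : ℝ :=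
  sSup {r : ℝ | ∃ μ ∈ spectrum ℂ (M.map (Complex.ofReal)), r = ‖μ‖}

/-- Euclidean norm of a vector in `Fin n → ℝ`. -/
noncomputable def eucNorm {n : ℕ} (v : Fin n → ℝ) : ℝ :=
  Real.sqrt (∑ i, (v i) ^ 2)

open WithLp

/-!
The grounded walk matrix `P̲` satisfies detailed balance `d i P̲ i j = d j P̲ j i`, so conjugating it
by `D^{1/2}` gives a symmetric matrix `N̲`; its eigenvalues are eigenvalues of `P̲`, hence of
absolute value at most `ρ̲ < 1`. The error `e t = q t - q∞` obeys `e (t + 1) = P̲ e t`, so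
`z t = D^{1/2} e t` obeys `z t = N̲^t z 0` with `(I - N̲) z 0 = -D^{1/2} D⁻¹ b̲`. In an orthonormal
eigenbasis of `N̲` each coordinate of `z t` is `λ^t / (1 - λ)` times the corresponding coordinate of
`(I - N̲) z 0`, and `|λ|^t / |1 - λ| ≤ ρ̲^t / (1 - ρ̲)`. Finally `‖D^{1/2} D⁻¹ b̲‖ = vol(source)^{-1/2}`,
and undoing the rescaling costs at most `vol_min^{-1/2}`.
-/

theorem abs_pow_le_div_one_sub_mul_abs_one_sub {μ ρ : ℝ} (hμ : |μ| ≤ ρ) (hρ : ρ < 1) (t : ℕ) :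
    |μ| ^ t ≤ ρ ^ t / (1 - ρ) * |1 - μ| := by
  have h1ρ : 0 < 1 - ρ := by linarith
  have hgap : 1 - ρ ≤ |1 - μ| :=
    (show 1 - ρ ≤ 1 - μ by linarith [le_abs_self μ]).trans (le_abs_self _)
  calc |μ| ^ t ≤ ρ ^ t := pow_le_pow_left₀ (abs_nonneg μ) hμ t
    _ = ρ ^ t / (1 - ρ) * (1 - ρ) := by field_simp
    _ ≤ ρ ^ t / (1 - ρ) * |1 - μ| := by
      gcongr
      exact div_nonneg (pow_nonneg ((abs_nonneg μ).trans hμ) t) h1ρ.le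

theorem inv_sqrt_mul_inv_sqrt_le {a b c : ℝ} (ha : 0 < a) (hb : 0 ≤ b) (hbc : b ≤ c) :
    (√a)⁻¹ * (√b)⁻¹ ≤ √(c / a) / b := by
  rw [← Real.sqrt_div_self (x := b), Real.sqrt_div' _ ha.le]
  calc (√a)⁻¹ * (√b / b) = √b / √a / b := by ring
    _ ≤ √c / √a / b := by gcongr

theorem EuclideanSpace.norm_le_mul_norm_of_forall {𝕜 ι : Type*} [RCLike 𝕜] [Fintype ι]
    {x y : EuclideanSpace 𝕜 ι} {K : ℝ} (hK : 0 ≤ K) (h : ∀ i, ‖x i‖ ≤ K * ‖y i‖) :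
    ‖x‖ ≤ K * ‖y‖ := by
  rw [EuclideanSpace.norm_eq, EuclideanSpace.norm_eq, ← Real.sqrt_sq hK,
    ← Real.sqrt_mul (sq_nonneg _), Finset.mul_sum]
  gcongr with i
  rw [← mul_pow]
  exact pow_le_pow_left₀ (norm_nonneg _) (h i) 2

section Symmetric

variable {𝕜 E : Type*} [RCLike 𝕜] [NormedAddCommGroup E] [InnerProductSpace 𝕜 E]
  [FiniteDimensional 𝕜 E]

theorem LinearMap.IsSymmetric.norm_pow_apply_le {T : E →ₗ[𝕜] E} (hT : T.IsSymmetric) {ρ : ℝ}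
    (hρ0 : 0 ≤ ρ) (hρ : ρ < 1) (heig : ∀ μ : ℝ, Module.End.HasEigenvalue T (μ : 𝕜) → |μ| ≤ ρ)
    (t : ℕ) (y : E) :
    ‖(T ^ t) y‖ ≤ ρ ^ t / (1 - ρ) * ‖y - T y‖ := by
  set b := hT.eigenvectorBasis rfl
  set ev := hT.eigenvalues rfl
  have hstep : ∀ i z, inner 𝕜 (b i) (T z) = ev i * inner 𝕜 (b i) z := by
    intro i z
    rw [← hT, hT.apply_eigenvectorBasis, inner_smul_left, RCLike.conj_ofReal]
  have hpow : ∀ k i, inner 𝕜 (b i) ((T ^ k) y) = (ev i : 𝕜) ^ k * inner 𝕜 (b i) y := by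
    intro k i
    induction k with
    | zero => simp
    | succ k ih => rw [pow_succ', Module.End.mul_apply, hstep, ih, pow_succ', mul_assoc]
  have hK : 0 ≤ ρ ^ t / (1 - ρ) := div_nonneg (pow_nonneg hρ0 t) (by linarith)
  rw [← b.repr.norm_map, ← b.repr.norm_map (y - T y)]
  refine EuclideanSpace.norm_le_mul_norm_of_forall hK fun i => ?_
  rw [b.repr_apply_apply, b.repr_apply_apply, hpow, inner_sub_right, hstep, ← one_sub_mul,
    norm_mul, norm_mul, ← mul_assoc, norm_pow, RCLike.norm_ofReal,
    show (1 : 𝕜) - ev i = ((1 - ev i : ℝ) : 𝕜) by push_cast; rfl, RCLike.norm_ofReal]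
  gcongr
  exact abs_pow_le_div_one_sub_mul_abs_one_sub (heig _ (hT.hasEigenvalue_eigenvalues rfl i)) hρ t

end Symmetric

section Symmetrization

variable {ι : Type*} [Fintype ι] [DecidableEq ι] {M : Matrix ι ι ℝ} {s : ι → ℝ}

theorem conj_diagonal_mulVec (hs : ∀ i, s i ≠ 0) (v : ι → ℝ) :
    (diagonal s * M * diagonal s⁻¹) *ᵥ (s * v) = s * (M *ᵥ v) := by
  have hinv : diagonal s⁻¹ *ᵥ (s * v) = v := by
    ext i
    simp [mulVec_diagonal, hs]
  rw [← mulVec_mulVec, ← mulVec_mulVec, hinv]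
  ext i
  simp [mulVec_diagonal]

theorem isSymm_conj_diagonal_sqrt {w : ι → ℝ} (hw : ∀ i, 0 < w i)
    (hrev : ∀ i j, w i * M i j = w j * M j i) :
    (diagonal (fun i => √(w i)) * M * diagonal (fun i => √(w i))⁻¹).IsSymm := by
  ext i j
  have hi := Real.sqrt_pos.2 (hw i)
  have hj := Real.sqrt_pos.2 (hw j)
  simp only [transpose_apply, mul_diagonal, diagonal_mul, Pi.inv_apply]
  field_simp
  have := hrev j i
  rw [← Real.mul_self_sqrt (hw i).le, ← Real.mul_self_sqrt (hw j).le] at this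
  nlinarith

theorem mul_apply_comm_of_grounded {A : Matrix ι ι ℝ} (hA : A.IsSymm) {d : ι → ℝ} (hd : ∀ i, d i ≠ 0) {k : ι}
    (hM : ∀ i j, M i j = if i = k ∨ j = k then 0 else ((diagonal fun u => (d u)⁻¹) * A) i j)
    (i j : ι) : d i * M i j = d j * M j i := by
  simp only [hM, or_comm (a := j = k)]
  split_ifs
  · simp
  · simp only [diagonal_mul]
    field_simp [hd i, hd j]
    exact hA.apply j i

end Symmetrization

theorem specRad_nonneg {n : ℕ} (M : Matrix (Fin n) (Fin n) ℝ) : 0 ≤ specRad M :=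
  Real.sSup_nonneg fun _ ⟨_, _, hr⟩ => hr ▸ norm_nonneg _

theorem abs_le_specRad_of_mulVec_eq_smul {n : ℕ} {M : Matrix (Fin n) (Fin n) ℝ} {μ : ℝ}
    {v : Fin n → ℝ} (hv : v ≠ 0) (hMv : M *ᵥ v = μ • v) : |μ| ≤ specRad M := by
  have hmem : (μ : ℂ) ∈ spectrum ℂ (M.map Complex.ofReal) := by
    rw [spectrum.mem_iff, isUnit_iff_isUnit_det, isUnit_iff_ne_zero, not_not,
      ← exists_mulVec_eq_zero_iff]
    refine ⟨Complex.ofReal ∘ v, fun h => hv (funext fun i => by simpa using congrFun h i), ?_⟩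
    ext i
    have hmap : (M.map Complex.ofReal *ᵥ (Complex.ofReal ∘ v)) i = ((M *ᵥ v) i : ℂ) :=
      (Complex.ofRealHom.map_mulVec M v i).symm
    simp [sub_mulVec, algebraMap_eq_diagonal, mulVec_diagonal, hmap, hMv]
  have hbdd : BddAbove {r : ℝ | ∃ μ ∈ spectrum ℂ (M.map Complex.ofReal), r = ‖μ‖} :=
    (((M.map Complex.ofReal).finite_spectrum.image (‖·‖)).subset
      (by rintro _ ⟨μ, hμ, rfl⟩; exact ⟨μ, hμ, rfl⟩)).bddAbove
  exact le_csSup hbdd ⟨μ, hmem, by simp⟩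

theorem abs_le_specRad_of_hasEigenvalue_conj {n : ℕ} {M : Matrix (Fin n) (Fin n) ℝ}
    {s : Fin n → ℝ} (hs : ∀ i, s i ≠ 0) {μ : ℝ}
    (hμ : Module.End.HasEigenvalue (toEuclideanLin (diagonal s * M * diagonal s⁻¹)) μ) :
    |μ| ≤ specRad M := by
  obtain ⟨u, hu, hu0⟩ := hμ.exists_hasEigenvector
  have hsv : s * (s⁻¹ * ofLp u) = ofLp u := by
    ext i
    simp [hs i]
  refine abs_le_specRad_of_mulVec_eq_smul (v := s⁻¹ * ofLp u) ?_ ?_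
  · intro h
    rw [h, mul_zero] at hsv
    exact hu0 (by simpa using hsv.symm)
  · have h := congrArg ofLp (Module.End.mem_eigenspace_iff.1 hu)
    rw [toLpLin_apply, ← hsv, conj_diagonal_mulVec hs, ofLp_smul] at h
    ext i
    have hi := congrFun h i
    simp only [Pi.mul_apply, Pi.smul_apply, smul_eq_mul, Pi.inv_apply] at hi ⊢
    field_simp [hs i]
    linarith

theorem isUnit_one_sub_of_specRad_lt_one {n : ℕ} {M : Matrix (Fin n) (Fin n) ℝ}
    (hM : specRad M < 1) : IsUnit (1 - M) := by
  rw [isUnit_iff_isUnit_det, isUnit_iff_ne_zero, Ne, ← exists_mulVec_eq_zero_iff]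
  rintro ⟨v, hv, hMv⟩
  rw [sub_mulVec, one_mulVec, sub_eq_zero] at hMv
  have h1 : M *ᵥ v = (1 : ℝ) • v := by rw [one_smul]; exact hMv.symm
  have := abs_le_specRad_of_mulVec_eq_smul hv h1
  norm_num at this
  linarith

theorem eq_mulVec_add_of_eq_inv_one_sub_mulVec {ι R : Type*} [Fintype ι] [DecidableEq ι]
    [CommRing R] {M : Matrix ι ι R} (hM : IsUnit (1 - M)) {f x : ι → R}
    (hx : x = (1 - M)⁻¹ *ᵥ f) : x = M *ᵥ x + f := by
  have h : (1 - M) *ᵥ x = f := by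
    rw [hx, mulVec_mulVec, mul_nonsing_inv _ ((isUnit_iff_isUnit_det _).1 hM), one_mulVec]
  rw [← h, sub_mulVec, one_mulVec, add_sub_cancel]

theorem eucNorm_eq_norm {n : ℕ} (v : Fin n → ℝ) : eucNorm v = ‖toLp 2 v‖ := by
  simp [eucNorm, EuclideanSpace.norm_eq]

theorem eucNorm_le_inv_sqrt_mul_eucNorm {n : ℕ} {w : Fin n → ℝ} {c : ℝ} (hc : 0 < c)
    (hw : ∀ i, c ≤ w i) (v : Fin n → ℝ) :
    eucNorm v ≤ (√c)⁻¹ * eucNorm ((fun i => √(w i)) * v) := by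
  rw [eucNorm_eq_norm, eucNorm_eq_norm]
  refine EuclideanSpace.norm_le_mul_norm_of_forall (by positivity) fun i => ?_
  have hci : √c ≤ √(w i) := Real.sqrt_le_sqrt (hw i)
  have hc' : 0 < √c := Real.sqrt_pos.2 hc
  simp only [Pi.mul_apply, norm_mul, Real.norm_eq_abs,
    abs_of_nonneg (Real.sqrt_nonneg _)]
  rw [← mul_assoc]
  exact le_mul_of_one_le_left (abs_nonneg _) ((one_le_inv_mul₀ hc').2 hci)

theorem eucNorm_sqrt_mul_single {n : ℕ} (d : Fin n → ℝ) (k : Fin n) :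
    eucNorm ((fun i => √(d i)) * ((diagonal fun u => (d u)⁻¹) *ᵥ Pi.single k 1)) =
      (√(d k))⁻¹ := by
  have h : (fun i => √(d i)) * ((diagonal fun u => (d u)⁻¹) *ᵥ Pi.single k 1) =
      Pi.single k (√(d k) * (d k)⁻¹) := by
    ext i
    rcases eq_or_ne i k with rfl | hik <;> simp [*]
  rw [h, ← div_eq_mul_inv, Real.sqrt_div_self]
  simp [eucNorm, Pi.single_apply]

theorem eucNorm_sqrt_mul_iterate_sub_le {n : ℕ} {M : Matrix (Fin n) (Fin n) ℝ}
    {w : Fin n → ℝ} (hw : ∀ i, 0 < w i) (hrev : ∀ i j, w i * M i j = w j * M j i)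
    (hM : specRad M < 1) {f qinf : Fin n → ℝ} {q : ℕ → Fin n → ℝ} (hq0 : q 0 = 0)
    (hq : ∀ t, q (t + 1) = M *ᵥ q t + f) (hqinf : qinf = M *ᵥ qinf + f) (t : ℕ) :
    eucNorm ((fun i => √(w i)) * (q t - qinf)) ≤
      specRad M ^ t / (1 - specRad M) * eucNorm ((fun i => √(w i)) * f) := by
  set s : Fin n → ℝ := fun i => √(w i)
  have hs : ∀ i, s i ≠ 0 := fun i => (Real.sqrt_pos.2 (hw i)).ne'
  set T := toEuclideanLin (diagonal s * M * diagonal s⁻¹)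
  have hT : T.IsSymmetric := isSymmetric_toEuclideanLin_iff.2
    (isHermitian_iff_isSymm.2 (isSymm_conj_diagonal_sqrt hw hrev))
  have herr : ∀ k, q (k + 1) - qinf = M *ᵥ (q k - qinf) := by
    intro k
    rw [hq k, mulVec_sub]
    nth_rewrite 1 [hqinf]
    abel
  set z : ℕ → EuclideanSpace ℝ (Fin n) := fun k => toLp 2 (s * (q k - qinf))
  have hz : ∀ k, z k = (T ^ k) (z 0) := by
    intro k
    induction k with
    | zero => rfl
    | succ k ih =>
      rw [pow_succ', Module.End.mul_apply, ← ih]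
      simp only [z, T, toLpLin_apply, conj_diagonal_mulVec hs, herr]
  have hz0 : z 0 - T (z 0) = -toLp 2 (s * f) := by
    simp only [z, T, toLpLin_apply, conj_diagonal_mulVec hs, hq0, ← toLp_sub, ← toLp_neg]
    congr 1
    have hf : f = qinf - M *ᵥ qinf := by rw [eq_sub_iff_add_eq, add_comm, ← hqinf]
    rw [hf, zero_sub, mulVec_neg]
    ring
  calc eucNorm (s * (q t - qinf)) = ‖(T ^ t) (z 0)‖ := by rw [eucNorm_eq_norm, ← hz]
    _ ≤ specRad M ^ t / (1 - specRad M) * ‖z 0 - T (z 0)‖ :=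
      hT.norm_pow_apply_le (specRad_nonneg M) hM
        (fun _ hμ => abs_le_specRad_of_hasEigenvalue_conj hs hμ) t _
    _ = specRad M ^ t / (1 - specRad M) * eucNorm (s * f) := by
      rw [hz0, norm_neg, eucNorm_eq_norm]

theorem stmt13_general {n : ℕ} (A : Matrix (Fin n) (Fin n) ℝ)
    (hsym : A.IsSymm)
    (d : Fin n → ℝ) (hpos : ∀ u, 0 < d u)
    (source sink : Fin n)
    (P Punder : Matrix (Fin n) (Fin n) ℝ)
    (hP : P = (Matrix.diagonal fun u => (d u)⁻¹) * A)
    (hPunder : ∀ i j, Punder i j = if i = sink ∨ j = sink then 0 else P i j)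
    (hρ : specRad Punder < 1)
    (volmin volmax : ℝ)
    (hmin : (∀ u, volmin ≤ d u) ∧ ∃ u, d u = volmin)
    (hmax : (∀ u, d u ≤ volmax) ∧ ∃ u, d u = volmax)
    (bu : Fin n → ℝ) (hbu : bu = Pi.single source 1)
    (q : ℕ → Fin n → ℝ) (hq0 : q 0 = 0)
    (hqrec : ∀ t, q (t + 1) =
      Punder.mulVec (q t) + (Matrix.diagonal fun u => (d u)⁻¹).mulVec bu)
    (qinf : Fin n → ℝ)
    (hqinf : qinf = (1 - Punder)⁻¹.mulVec ((Matrix.diagonal fun u => (d u)⁻¹).mulVec bu)) :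
    ∀ t : ℕ, eucNorm (q t - qinf) ≤
      Real.sqrt (volmax / volmin) * (specRad Punder) ^ t /
        ((1 - specRad Punder) * d source) := by
  intro t
  subst hP hbu
  set ρ := specRad Punder
  have hfix := eq_mulVec_add_of_eq_inv_one_sub_mulVec (isUnit_one_sub_of_specRad_lt_one hρ) hqinf
  have hweighted := eucNorm_sqrt_mul_iterate_sub_le hpos
    (mul_apply_comm_of_grounded hsym (fun i => (hpos i).ne') hPunder) hρ hq0 hqrec hfix t
  rw [eucNorm_sqrt_mul_single] at hweighted
  have hvolmin : 0 < volmin := hmin.2.elim fun u hu => hu ▸ hpos u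
  have hK : 0 ≤ ρ ^ t / (1 - ρ) := div_nonneg (pow_nonneg (specRad_nonneg _) t) (by linarith)
  calc eucNorm (q t - qinf)
      ≤ (√volmin)⁻¹ * eucNorm ((fun i => √(d i)) * (q t - qinf)) :=
        eucNorm_le_inv_sqrt_mul_eucNorm hvolmin hmin.1 _
    _ ≤ (√volmin)⁻¹ * (ρ ^ t / (1 - ρ) * (√(d source))⁻¹) := by gcongr
    _ = ρ ^ t / (1 - ρ) * ((√volmin)⁻¹ * (√(d source))⁻¹) := by ring
    _ ≤ ρ ^ t / (1 - ρ) * (√(volmax / volmin) / d source) :=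
        mul_le_mul_of_nonneg_left
          (inv_sqrt_mul_inv_sqrt_le hvolmin (hpos source).le (hmax.1 source)) hK
    _ = √(volmax / volmin) * ρ ^ t / ((1 - ρ) * d source) := by
      rw [div_mul_div_comm, mul_comm (ρ ^ t)]

/-- For the token diffusion iteration `q(t+1) = P̲ q(t) + D⁻¹ b̲`, `q(0) = 0`, with
limit `q(∞) = (I - P̲)⁻¹ D⁻¹ b̲`, the error satisfies
`‖q(t) - q(∞)‖ ≤ (vol_max/vol_min)^(1/2) · ρ̲^t / ((1 - ρ̲) · vol(source))`. -/
theorem stmt13 {n : ℕ} (A : Matrix (Fin n) (Fin n) ℝ)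
    (hsym : A.IsSymm) (hnonneg : ∀ u v, 0 ≤ A u v)
    (d : Fin n → ℝ) (hd : ∀ u, d u = ∑ v, A u v) (hpos : ∀ u, 0 < d u)
    (source sink : Fin n) (hss : source ≠ sink)
    (P Punder : Matrix (Fin n) (Fin n) ℝ)
    (hP : P = (Matrix.diagonal fun u => (d u)⁻¹) * A)
    (hPunder : ∀ i j, Punder i j = if i = sink ∨ j = sink then 0 else P i j)
    (hρ0 : 0 < specRad Punder) (hρ : specRad Punder < 1)
    (volmin volmax : ℝ)
    (hmin : (∀ u, volmin ≤ d u) ∧ ∃ u, d u = volmin)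
    (hmax : (∀ u, d u ≤ volmax) ∧ ∃ u, d u = volmax)
    (bu : Fin n → ℝ) (hbu : bu = Pi.single source 1)
    (q : ℕ → Fin n → ℝ) (hq0 : q 0 = 0)
    (hqrec : ∀ t, q (t + 1) =
      Punder.mulVec (q t) + (Matrix.diagonal fun u => (d u)⁻¹).mulVec bu)
    (qinf : Fin n → ℝ)
    (hqinf : qinf = (1 - Punder)⁻¹.mulVec ((Matrix.diagonal fun u => (d u)⁻¹).mulVec bu)) :
    ∀ t : ℕ, eucNorm (q t - qinf) ≤
      Real.sqrt (volmax / volmin) * (specRad Punder) ^ t /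
        ((1 - specRad Punder) * d source) :=
  stmt13_general A hsym d hpos source sink P Punder hP hPunder hρ volmin volmax hmin hmax bu hbu q
    hq0 hqrec qinf hqinf
end

section
/- Let λ̲ = 1 − ρ̲ where ρ̲ is the spectral radius of the sink-grounded transition matrix of a connected weighted graph on n nodes. Then λ̲ ≥ (λ̄₂ / (2·vol_max·(n−1))) · Σ_{i≠sink} w_{i,sink}/(w_{i,sink} + λ̄₂), where λ̄₂ is the second smallest eigenvalue of the Laplacian of the graph with the sink removed, vol_max is the maximum node volume, and w_{i,sink} is the weight of the edge from i to the sink (0 if absent). -/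
/-
Write a vector on the non-sink vertices as `x = u + s • 1` with `∑ u = 0`. The Laplacian energy of
`Ḡ` only sees `u` and is at least `λ̄₂ ‖u‖²`, while the sink edges pay for the mean, since
`b u² + w (u + s)² ≥ (b w / (w + b)) s²`. Hence the grounded energy `xᵀ L̄ x + ∑ wᵢ xᵢ²`
(`wᵢ = w_{i,sink}`) is at least `λ̄₂ / (2 (n - 1)) · ∑ wᵢ / (wᵢ + λ̄₂) · ‖x‖² ≥ c ∑ dᵢ xᵢ²`,
with `c` the claimed bound. For an eigenpair `P̲ z = μ z`, pairing `D P̲ z = A̲ z` with `z̄` gives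
`|μ| ∑ dᵢ |zᵢ|² ≤ ∑ A̲ᵢⱼ |zᵢ| |zⱼ| = ∑ dᵢ yᵢ² - (grounded energy of y = |z|) ≤ (1 - c) ∑ dᵢ yᵢ²`.
-/

open Matrix

/-- Second smallest Laplacian eigenvalue (Fiedler value) via the variational
characterization over vectors orthogonal to the all-ones vector. -/
noncomputable def fiedler {ι : Type*} [Fintype ι] (L : Matrix ι ι ℝ) : ℝ :=
  sInf {r : ℝ | ∃ x : ι → ℝ, x ≠ 0 ∧ (∑ i, x i) = 0 ∧
    r = (x ⬝ᵥ L.mulVec x) / (∑ i, (x i) ^ 2)}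

open Finset ComplexConjugate

section Laplacian

variable {ι : Type*} [Fintype ι] [DecidableEq ι]

def weightedLaplacian (B : Matrix ι ι ℝ) : Matrix ι ι ℝ :=
  diagonal (fun i => ∑ j, B i j) - B

theorem dotProduct_weightedLaplacian_mulVec (B : Matrix ι ι ℝ) (x : ι → ℝ) :
    x ⬝ᵥ weightedLaplacian B *ᵥ x =
      ∑ i, (∑ j, B i j) * x i ^ 2 - ∑ i, ∑ j, B i j * x i * x j := by
  rw [weightedLaplacian, sub_mulVec, dotProduct_sub]
  simp only [dotProduct, mulVec_diagonal]
  simp only [mulVec, dotProduct, mul_sum]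
  congr 1 <;> refine sum_congr rfl fun i _ => ?_
  · ring
  · exact sum_congr rfl fun j _ => by ring

theorem two_mul_dotProduct_weightedLaplacian_mulVec {B : Matrix ι ι ℝ} (hB : B.IsSymm)
    (x : ι → ℝ) :
    2 * (x ⬝ᵥ weightedLaplacian B *ᵥ x) = ∑ i, ∑ j, B i j * (x i - x j) ^ 2 := by
  have hswap : ∑ i, ∑ j, B i j * x j ^ 2 = ∑ i, (∑ j, B i j) * x i ^ 2 := by
    rw [sum_comm]
    simp only [sum_mul, hB.apply]
  have hexp : ∑ i, ∑ j, B i j * (x i - x j) ^ 2 = ∑ i, (∑ j, B i j) * x i ^ 2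
      - 2 * ∑ i, ∑ j, B i j * x i * x j + ∑ i, ∑ j, B i j * x j ^ 2 := by
    simp only [sum_mul, mul_sum, ← sum_sub_distrib, ← sum_add_distrib]
    exact sum_congr rfl fun i _ => sum_congr rfl fun j _ => by ring
  rw [dotProduct_weightedLaplacian_mulVec, hexp, hswap]
  ring

theorem dotProduct_weightedLaplacian_mulVec_nonneg {B : Matrix ι ι ℝ} (hB : B.IsSymm)
    (hB₀ : ∀ i j, 0 ≤ B i j) (x : ι → ℝ) : 0 ≤ x ⬝ᵥ weightedLaplacian B *ᵥ x := by
  have := two_mul_dotProduct_weightedLaplacian_mulVec hB x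
  have : 0 ≤ ∑ i, ∑ j, B i j * (x i - x j) ^ 2 :=
    sum_nonneg fun i _ => sum_nonneg fun j _ => mul_nonneg (hB₀ i j) (sq_nonneg _)
  linarith

theorem dotProduct_weightedLaplacian_mulVec_sub_const {B : Matrix ι ι ℝ} (hB : B.IsSymm)
    (x : ι → ℝ) (s : ℝ) :
    (fun i => x i - s) ⬝ᵥ weightedLaplacian B *ᵥ (fun i => x i - s) =
      x ⬝ᵥ weightedLaplacian B *ᵥ x := by
  have h := two_mul_dotProduct_weightedLaplacian_mulVec hB (fun i => x i - s)
  simp only [sub_sub_sub_cancel_right, ← two_mul_dotProduct_weightedLaplacian_mulVec hB x] at h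
  linarith

end Laplacian

section Fiedler

variable {ι : Type*} [Fintype ι] {L : Matrix ι ι ℝ}

theorem fiedler_nonneg (hL : ∀ x, 0 ≤ x ⬝ᵥ L *ᵥ x) : 0 ≤ fiedler L :=
  Real.sInf_nonneg fun _ ⟨x, _, _, hr⟩ => hr ▸ div_nonneg (hL x) (by positivity)

theorem fiedler_mul_sum_sq_le (hL : ∀ x, 0 ≤ x ⬝ᵥ L *ᵥ x) {u : ι → ℝ} (hu : ∑ i, u i = 0) :
    fiedler L * ∑ i, u i ^ 2 ≤ u ⬝ᵥ L *ᵥ u := by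
  rcases eq_or_ne u 0 with rfl | hne
  · simp
  have hpos : 0 < ∑ i, u i ^ 2 := by
    obtain ⟨i, hi⟩ := Function.ne_iff.mp hne
    exact sum_pos' (fun j _ => sq_nonneg _) ⟨i, mem_univ _, sq_pos_of_ne_zero hi⟩
  rw [← le_div_iff₀ hpos]
  exact csInf_le ⟨0, fun _ ⟨x, _, _, hr⟩ => hr ▸ div_nonneg (hL x) (by positivity)⟩
    ⟨u, hne, hu, rfl⟩

end Fiedler

theorem mul_div_add_mul_sq_le {b w : ℝ} (hb : 0 ≤ b) (hw : 0 ≤ w) (s u : ℝ) :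
    b * (w / (w + b)) * s ^ 2 ≤ b * u ^ 2 + w * (u + s) ^ 2 := by
  rcases (add_nonneg hw hb).eq_or_lt with h | h
  · rw [← h, div_zero, mul_zero, zero_mul]
    positivity
  rw [mul_div_assoc', div_mul_eq_mul_div, div_le_iff₀ h]
  nlinarith [sq_nonneg (b * u + w * (u + s))]

section Mean

variable {ι : Type*} [Fintype ι] [Nonempty ι]

theorem sum_sub_mean (x : ι → ℝ) : ∑ i, (x i - (∑ j, x j) / Fintype.card ι) = 0 := by
  have : (Fintype.card ι : ℝ) ≠ 0 := by simp [Fintype.card_ne_zero]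
  rw [sum_sub_distrib, sum_const, card_univ, nsmul_eq_mul, mul_div_cancel₀ _ this, sub_self]

theorem sum_sq_eq_sum_sq_sub_mean_add (x : ι → ℝ) :
    ∑ i, x i ^ 2 = ∑ i, (x i - (∑ j, x j) / Fintype.card ι) ^ 2 +
      Fintype.card ι * ((∑ j, x j) / Fintype.card ι) ^ 2 := by
  set m := (∑ j, x j) / Fintype.card ι
  have h := sum_sub_mean x
  calc ∑ i, x i ^ 2 = ∑ i, ((x i - m) ^ 2 + 2 * m * (x i - m) + m ^ 2) :=
        sum_congr rfl fun i _ => by ring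
    _ = _ := by rw [sum_add_distrib, sum_add_distrib, ← mul_sum, h, sum_const, card_univ,
        nsmul_eq_mul, mul_zero, add_zero]

end Mean

section Grounded

variable {ι : Type*} [Fintype ι] [DecidableEq ι]

theorem fiedler_div_mul_sum_mul_sum_sq_le {B : Matrix ι ι ℝ} (hB : B.IsSymm)
    (hB₀ : ∀ i j, 0 ≤ B i j) {w : ι → ℝ} (hw : ∀ i, 0 ≤ w i) [Nonempty ι] (x : ι → ℝ) :
    fiedler (weightedLaplacian B) / (2 * Fintype.card ι) *
        (∑ i, w i / (w i + fiedler (weightedLaplacian B))) * ∑ i, x i ^ 2 ≤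
      x ⬝ᵥ weightedLaplacian B *ᵥ x + ∑ i, w i * x i ^ 2 := by
  set L := weightedLaplacian B
  set β := fiedler L
  set S := ∑ i, w i / (w i + β)
  set M : ℝ := (Fintype.card ι : ℝ)
  set s := (∑ i, x i) / M
  set u : ι → ℝ := fun i => x i - s
  have hL := dotProduct_weightedLaplacian_mulVec_nonneg hB hB₀
  have hβ : 0 ≤ β := fiedler_nonneg hL
  have hM : 0 < M := by simp [M, Fintype.card_pos]
  have hQ : x ⬝ᵥ L *ᵥ x = u ⬝ᵥ L *ᵥ u :=
    (dotProduct_weightedLaplacian_mulVec_sub_const hB x s).symm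
  have hW : 0 ≤ ∑ i, w i * x i ^ 2 := sum_nonneg fun i _ => mul_nonneg (hw i) (sq_nonneg _)
  have hfluct : β * ∑ i, u i ^ 2 ≤ u ⬝ᵥ L *ᵥ u := fiedler_mul_sum_sq_le hL (sum_sub_mean x)
  -- the sink edges control the mean `s`
  have hmean : β * S * s ^ 2 ≤ β * ∑ i, u i ^ 2 + ∑ i, w i * x i ^ 2 := by
    rw [mul_sum, sum_mul, mul_sum, ← sum_add_distrib]
    refine sum_le_sum fun i _ => ?_
    simpa [u] using mul_div_add_mul_sq_le hβ (hw i) s (u i)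
  have hSM : S ≤ M := by
    calc S ≤ ∑ _i : ι, (1 : ℝ) := sum_le_sum fun i _ =>
          div_le_one_of_le₀ (le_add_of_nonneg_right hβ) (add_nonneg (hw i) hβ)
      _ = M := by simp [M]
  have hfluct' : β / (2 * M) * S * ∑ i, u i ^ 2 ≤ (β * ∑ i, u i ^ 2) / 2 := by
    have hU : 0 ≤ (β * ∑ i, u i ^ 2) / 2 := by positivity
    calc β / (2 * M) * S * ∑ i, u i ^ 2 = (β * ∑ i, u i ^ 2) / 2 * (S / M) := by ring
      _ ≤ (β * ∑ i, u i ^ 2) / 2 := mul_le_of_le_one_right hU ((div_le_one hM).mpr hSM)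
  have hx : ∑ i, x i ^ 2 = ∑ i, u i ^ 2 + M * s ^ 2 := sum_sq_eq_sum_sq_sub_mean_add x
  calc β / (2 * M) * S * ∑ i, x i ^ 2
      = β / (2 * M) * S * ∑ i, u i ^ 2 + β * S * s ^ 2 / 2 := by
        rw [hx]; field_simp
    _ ≤ x ⬝ᵥ L *ᵥ x + ∑ i, w i * x i ^ 2 := by linarith

theorem sum_mul_mul_le_one_sub_mul {B : Matrix ι ι ℝ} (hB : B.IsSymm) (hB₀ : ∀ i j, 0 ≤ B i j)
    {w : ι → ℝ} (hw : ∀ i, 0 ≤ w i) [Nonempty ι] {V : ℝ} (hV₀ : 0 < V)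
    (hV : ∀ i, ∑ j, B i j + w i ≤ V) (x : ι → ℝ) :
    ∑ i, ∑ j, B i j * x i * x j ≤
      (1 - fiedler (weightedLaplacian B) / (2 * V * Fintype.card ι) *
        ∑ i, w i / (w i + fiedler (weightedLaplacian B))) *
        ∑ i, (∑ j, B i j + w i) * x i ^ 2 := by
  set β := fiedler (weightedLaplacian B)
  set S := ∑ i, w i / (w i + β)
  set M : ℝ := (Fintype.card ι : ℝ)
  have hβ : 0 ≤ β := fiedler_nonneg (dotProduct_weightedLaplacian_mulVec_nonneg hB hB₀)
  have hS : 0 ≤ S := sum_nonneg fun i _ => div_nonneg (hw i) (add_nonneg (hw i) hβ)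
  have hM : 0 < M := by simp [M, Fintype.card_pos]
  have hc : 0 ≤ β / (2 * V * M) * S := by positivity
  have hcV : β / (2 * V * M) * S * V = β / (2 * M) * S := by field_simp
  have hdeg : ∑ i, (∑ j, B i j + w i) * x i ^ 2 ≤ V * ∑ i, x i ^ 2 := by
    rw [mul_sum]
    exact sum_le_sum fun i _ => mul_le_mul_of_nonneg_right (hV i) (sq_nonneg _)
  have hsplit : ∑ i, (∑ j, B i j + w i) * x i ^ 2 =
      ∑ i, (∑ j, B i j) * x i ^ 2 + ∑ i, w i * x i ^ 2 := by
    simp only [add_mul, sum_add_distrib]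
  have key : β / (2 * M) * S * ∑ i, x i ^ 2 ≤
      ∑ i, (∑ j, B i j) * x i ^ 2 - ∑ i, ∑ j, B i j * x i * x j + ∑ i, w i * x i ^ 2 := by
    rw [← dotProduct_weightedLaplacian_mulVec]
    exact fiedler_div_mul_sum_mul_sum_sq_le hB hB₀ hw x
  calc ∑ i, ∑ j, B i j * x i * x j
      ≤ ∑ i, (∑ j, B i j + w i) * x i ^ 2 - β / (2 * V * M) * S * V * ∑ i, x i ^ 2 := by
        rw [hcV, hsplit]; linarith
    _ ≤ ∑ i, (∑ j, B i j + w i) * x i ^ 2 -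
          β / (2 * V * M) * S * ∑ i, (∑ j, B i j + w i) * x i ^ 2 := by
        rw [mul_assoc _ V]; gcongr
    _ = _ := by ring

end Grounded

section Sink

variable {ι : Type*} [DecidableEq ι]

def groundAt (A : Matrix ι ι ℝ) (s : ι) : Matrix ι ι ℝ :=
  of fun i j => if i = s ∨ j = s then 0 else A i j

theorem groundAt_nonneg {A : Matrix ι ι ℝ} (hA : ∀ i j, 0 ≤ A i j) (s : ι) (i j : ι) :
    0 ≤ groundAt A s i j := by
  by_cases h : i = s ∨ j = s <;> simp [groundAt, h, hA]

theorem sum_groundAt_mul_mul_le [Fintype ι] {A : Matrix ι ι ℝ} {s : ι} {d : ι → ℝ}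
    (hd : ∀ i, 0 ≤ d i) {r : ℝ} (hr : 0 ≤ r)
    (h : ∀ x : {i // i ≠ s} → ℝ, ∑ i : {i // i ≠ s}, ∑ j : {i // i ≠ s}, A i j * x i * x j ≤
      r * ∑ i : {i // i ≠ s}, d i * x i ^ 2)
    (y : ι → ℝ) :
    ∑ i, ∑ j, groundAt A s i j * y i * y j ≤ r * ∑ i, d i * y i ^ 2 := by
  have hA : ∀ i j : {i // i ≠ s}, groundAt A s i j = A i j := fun i j =>
    if_neg (not_or.mpr ⟨i.2, j.2⟩)
  have hsink : 0 ≤ r * (d s * y s ^ 2) := by have := hd s; positivity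
  simp only [Fintype.sum_eq_add_sum_subtype_ne _ s, hA]
  simp only [groundAt, of_apply, true_or, or_true, ↓reduceIte, zero_mul, sum_const_zero,
    zero_add]
  linarith [h fun i => y i]

end Sink

section Spectrum

variable {ι : Type*} [Fintype ι]

theorem nonneg_of_forall_sum_mul_mul_le [Nonempty ι] {B : Matrix ι ι ℝ}
    (hB₀ : ∀ i j, 0 ≤ B i j) {d : ι → ℝ} (hd : ∀ i, 0 < d i) {r : ℝ}
    (h : ∀ x : ι → ℝ, ∑ i, ∑ j, B i j * x i * x j ≤ r * ∑ i, d i * x i ^ 2) : 0 ≤ r := by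
  have h1 := h fun _ => 1
  simp only [mul_one, one_pow] at h1
  exact nonneg_of_mul_nonneg_left ((sum_nonneg fun i _ => sum_nonneg fun j _ => hB₀ i j).trans h1)
    (sum_pos (fun i _ => hd i) univ_nonempty)

theorem norm_mul_sum_le_of_sum_mul_eq {A : Matrix ι ι ℝ} (hA : ∀ i j, 0 ≤ A i j)
    {d : ι → ℝ} (hd : ∀ i, 0 ≤ d i) {μ : ℂ} {z : ι → ℂ}
    (hz : ∀ i, ∑ j, (A i j : ℂ) * z j = μ * d i * z i) :
    ‖μ‖ * ∑ i, d i * ‖z i‖ ^ 2 ≤ ∑ i, ∑ j, A i j * ‖z i‖ * ‖z j‖ := by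
  have key : μ * ∑ i, (d i : ℂ) * (conj (z i) * z i) =
      ∑ i, ∑ j, (A i j : ℂ) * (conj (z i) * z j) := by
    rw [mul_sum]
    refine sum_congr rfl fun i _ => ?_
    calc μ * ((d i : ℂ) * (conj (z i) * z i)) = conj (z i) * (μ * d i * z i) := by ring
      _ = _ := by rw [← hz, mul_sum]; exact sum_congr rfl fun j _ => by ring
  have hD : 0 ≤ ∑ i, d i * ‖z i‖ ^ 2 := sum_nonneg fun i _ => by have := hd i; positivity
  calc ‖μ‖ * ∑ i, d i * ‖z i‖ ^ 2 = ‖μ * ∑ i, (d i : ℂ) * (conj (z i) * z i)‖ := by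
        simp_rw [Complex.conj_mul', norm_mul]
        congr 1
        exact_mod_cast (Complex.norm_of_nonneg hD).symm
    _ ≤ ∑ i, ∑ j, ‖(A i j : ℂ) * (conj (z i) * z j)‖ := by
        rw [key]
        exact (norm_sum_le _ _).trans (sum_le_sum fun i _ => norm_sum_le _ _)
    _ = ∑ i, ∑ j, A i j * ‖z i‖ * ‖z j‖ := by
        simp only [norm_mul, Complex.norm_real, Real.norm_of_nonneg (hA _ _), Complex.norm_conj,
          mul_assoc]

theorem norm_le_of_mem_spectrum_diagonal_inv_mul [DecidableEq ι] {A : Matrix ι ι ℝ}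
    (hA : ∀ i j, 0 ≤ A i j) {d : ι → ℝ} (hd : ∀ i, 0 < d i) {r : ℝ}
    (hr : ∀ y : ι → ℝ, (∀ i, 0 ≤ y i) →
      ∑ i, ∑ j, A i j * y i * y j ≤ r * ∑ i, d i * y i ^ 2)
    {μ : ℂ} (hμ : μ ∈ spectrum ℂ (((diagonal fun i => (d i)⁻¹) * A).map Complex.ofReal)) :
    ‖μ‖ ≤ r := by
  rw [← Matrix.spectrum_toLin', ← Module.End.hasEigenvalue_iff_mem_spectrum] at hμ
  obtain ⟨z, hz⟩ := hμ.exists_hasEigenvector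
  have hentry : ∀ i, ∑ j, (A i j : ℂ) * z j = μ * d i * z i := by
    intro i
    have := congrFun hz.apply_eq_smul i
    simp only [toLin'_apply, mulVec, dotProduct, map_apply, diagonal_mul, Complex.ofReal_mul,
      Complex.ofReal_inv, Pi.smul_apply, smul_eq_mul] at this
    have hdi : (d i : ℂ) ≠ 0 := by exact_mod_cast (hd i).ne'
    rw [mul_right_comm, ← this, sum_mul]
    exact sum_congr rfl fun j _ => by field_simp
  have hD : 0 < ∑ i, d i * ‖z i‖ ^ 2 := by
    obtain ⟨i, hi⟩ := Function.ne_iff.mp hz.2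
    exact sum_pos' (fun j _ => by have := hd j; positivity)
      ⟨i, mem_univ _, mul_pos (hd i) (pow_pos (norm_pos_iff.mpr hi) 2)⟩
  exact le_of_mul_le_mul_right
    ((norm_mul_sum_le_of_sum_mul_eq hA (fun i => (hd i).le) hentry).trans
      (hr _ fun i => norm_nonneg _)) hD

theorem specRad_diagonal_inv_mul_le {n : ℕ} {A : Matrix (Fin n) (Fin n) ℝ}
    (hA : ∀ i j, 0 ≤ A i j) {d : Fin n → ℝ} (hd : ∀ i, 0 < d i) {r : ℝ} (hr₀ : 0 ≤ r)
    (hr : ∀ y : Fin n → ℝ, (∀ i, 0 ≤ y i) →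
      ∑ i, ∑ j, A i j * y i * y j ≤ r * ∑ i, d i * y i ^ 2) :
    specRad ((diagonal fun i => (d i)⁻¹) * A) ≤ r :=
  Real.sSup_le (fun _ ⟨_, hμ, hrμ⟩ => hrμ ▸ norm_le_of_mem_spectrum_diagonal_inv_mul hA hd hr hμ)
    hr₀

end Spectrum

theorem stmt17_general {n : ℕ} (hn : 2 ≤ n) (A : Matrix (Fin n) (Fin n) ℝ)
    (hsym : A.IsSymm) (hnonneg : ∀ u v, 0 ≤ A u v)
    (d : Fin n → ℝ) (hd : ∀ u, d u = ∑ v, A u v) (hpos : ∀ u, 0 < d u)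
    (sink : Fin n)
    (P Punder : Matrix (Fin n) (Fin n) ℝ)
    (hP : P = (Matrix.diagonal fun u => (d u)⁻¹) * A)
    (hPunder : ∀ i j, Punder i j = if i = sink ∨ j = sink then 0 else P i j)
    (Lbar : Matrix {i : Fin n // i ≠ sink} {i : Fin n // i ≠ sink} ℝ)
    (hLbar : ∀ i j, Lbar i j =
      (if i = j then ∑ k : {i : Fin n // i ≠ sink}, A i.1 k.1 else 0) - A i.1 j.1)
    (volmax : ℝ)
    (hmax : (∀ u, d u ≤ volmax) ∧ ∃ u, d u = volmax) :
    1 - specRad Punder ≥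
      fiedler Lbar / (2 * volmax * ((n : ℝ) - 1)) *
        ∑ i ∈ Finset.univ.erase sink, A i sink / (A i sink + fiedler Lbar) := by
  set B := A.submatrix (Subtype.val : {i // i ≠ sink} → Fin n) Subtype.val
  have hLbar' : Lbar = weightedLaplacian B := by
    ext i j
    rw [hLbar, weightedLaplacian, Matrix.sub_apply, diagonal_apply]
    rfl
  have hPunder' : Punder = (diagonal fun u => (d u)⁻¹) * groundAt A sink := by
    ext i j
    rw [hPunder, hP]
    simp [groundAt, diagonal_mul]
  have hdeg : ∀ i : {i // i ≠ sink}, ∑ j, B i j + A i sink = d i := fun i => by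
    rw [hd, Fintype.sum_eq_add_sum_subtype_ne _ sink, add_comm]
    rfl
  have hcard : Fintype.card {i // i ≠ sink} = n - 1 := by
    simp [Fintype.card_subtype_compl]
  have : Nonempty {i // i ≠ sink} := Fintype.card_pos_iff.mp (by omega)
  have hvol : 0 < volmax := (hpos sink).trans_le (hmax.1 sink)
  have hbar := sum_mul_mul_le_one_sub_mul (B := B) (hsym.submatrix _) (fun _ _ => hnonneg _ _)
    (fun i => hnonneg i sink) hvol (fun i => (hdeg i).trans_le (hmax.1 i.1))
  rw [← hLbar', hcard, Nat.cast_sub (by omega), Nat.cast_one] at hbar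
  simp only [hdeg] at hbar
  rw [sum_subtype (F := inferInstance) _ fun _ => mem_erase.trans (and_iff_left (mem_univ _))]
  have hc := nonneg_of_forall_sum_mul_mul_le (B := B) (fun _ _ => hnonneg _ _) (hpos ·) hbar
  have hρ := specRad_diagonal_inv_mul_le (groundAt_nonneg hnonneg sink) hpos hc
    fun y _ => sum_groundAt_mul_mul_le (fun i => (hpos i).le) hc hbar y
  rw [hPunder']
  linarith

/-- For a connected weighted graph on `n` nodes whose sink-removed graph `Ḡ` is also
connected, `λ̲ = 1 - ρ(P̲)` satisfies
`λ̲ ≥ (λ̄₂ / (2 vol_max (n-1))) ∑_{i ≠ sink} w_{i,sink} / (w_{i,sink} + λ̄₂)`,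
where `λ̄₂` is the Fiedler eigenvalue of the Laplacian of `Ḡ` and `vol_max` the maximum
volume. -/
theorem stmt17 {n : ℕ} (hn : 2 ≤ n) (A : Matrix (Fin n) (Fin n) ℝ)
    (hsym : A.IsSymm) (hnonneg : ∀ u v, 0 ≤ A u v)
    (hconn : (SimpleGraph.fromRel fun u v => A u v ≠ 0).Connected)
    (d : Fin n → ℝ) (hd : ∀ u, d u = ∑ v, A u v) (hpos : ∀ u, 0 < d u)
    (sink : Fin n)
    (hconnbar :
      (SimpleGraph.fromRel fun u v : {i : Fin n // i ≠ sink} => A u.1 v.1 ≠ 0).Connected)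
    (P Punder : Matrix (Fin n) (Fin n) ℝ)
    (hP : P = (Matrix.diagonal fun u => (d u)⁻¹) * A)
    (hPunder : ∀ i j, Punder i j = if i = sink ∨ j = sink then 0 else P i j)
    (Lbar : Matrix {i : Fin n // i ≠ sink} {i : Fin n // i ≠ sink} ℝ)
    (hLbar : ∀ i j, Lbar i j =
      (if i = j then ∑ k : {i : Fin n // i ≠ sink}, A i.1 k.1 else 0) - A i.1 j.1)
    (volmax : ℝ)
    (hmax : (∀ u, d u ≤ volmax) ∧ ∃ u, d u = volmax) :
    1 - specRad Punder ≥
      fiedler Lbar / (2 * volmax * ((n : ℝ) - 1)) *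
        ∑ i ∈ Finset.univ.erase sink, A i sink / (A i sink + fiedler Lbar) :=
  stmt17_general hn A hsym hnonneg d hd hpos sink P Punder hP hPunder Lbar hLbar volmax hmax
end
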